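/- In a null foliation adapted chart, with l = M (components M^r = g^{r3}g^{34} − g^{33}g^{r4}), α = −(g³³)^{−1/2}dx³, and N the vector field with components N^r = g^{r3}g^{44} − g^{34}g^{r4}: ∇_μ N^μ = 0 if and only if dM♭(M, α♯) = 0. (When g⁴⁴ ≠ 0 one has N = (g⁴⁴/g³⁴) M and ∇_μN^μ = 0 ⟺ M(g⁴⁴/g³⁴) = 0; when g⁴⁴ = 0, N = 0 and both sides hold.) -/

import Mathlib

noncomputable section

namespace FFE

/-- Points of the chart domain `U_p ⊆ M` of a spacetime, in coordinates
`(x¹,…,x⁴)` (indexed here by `0,…,3`, so `x³ ↦ 2` and `x⁴ ↦ 3`). -/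
abbrev Pt : Type := Fin 4 → ℝ

/-- Scalar fields. -/
abbrev Sc : Type := Pt → ℝ

/-- Vector fields, given by their chart components. -/
abbrev Vec : Type := Fin 4 → Sc

/-- Covector fields (1-forms), given by their chart components. -/
abbrev Cov : Type := Fin 4 → Sc

/-- 2-forms, given by their (antisymmetric) chart components. -/
abbrev Form2 : Type := Fin 4 → Fin 4 → Sc

/-- Partial derivative along the `i`-th coordinate. -/
def pd (i : Fin 4) (f : Sc) : Sc := fun p => fderiv ℝ f p (Pi.single i 1)

/-- Smoothness of a scalar field. -/
def Smooth (f : Sc) : Prop := ContDiff ℝ (⊤ : ℕ∞) f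

/-- Directional derivative of a scalar field along a vector field. -/
def act (v : Vec) (f : Sc) : Sc := ∑ i, v i * pd i f

/-- Lie bracket of vector fields. -/
def bracket (v w : Vec) : Vec := fun μ => act v (w μ) - act w (v μ)

/-- Exterior derivative of a 1-form, evaluated on two vector fields:
`dω(v,w) = (∂_μ ω_ν − ∂_ν ω_μ) v^μ w^ν`. -/
def dOne (ω : Cov) (v w : Vec) : Sc :=
  ∑ μ, ∑ ν, (pd μ (ω ν) - pd ν (ω μ)) * v μ * w ν

/-- `log |f|`. -/
def logabs (f : Sc) : Sc := fun p => Real.log |f p|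

/-- A (smooth) Lorentzian metric of signature `(-1,1,1,1)`, given in a chart by its
covariant components `gdown`, contravariant components `ginv`, and volume factor
`vol = √(−det g)`. -/
structure Lorentzian where
  gdown : Fin 4 → Fin 4 → Sc
  ginv : Fin 4 → Fin 4 → Sc
  vol : Sc
  smooth_gdown : ∀ μ ν, Smooth (gdown μ ν)
  smooth_ginv : ∀ μ ν, Smooth (ginv μ ν)
  smooth_vol : Smooth vol
  symm_gdown : ∀ μ ν, gdown μ ν = gdown ν μ
  symm_ginv : ∀ μ ν, ginv μ ν = ginv ν μ
  inv_gdown : ∀ μ ν p, (∑ ρ, ginv μ ρ p * gdown ρ ν p) = if μ = ν then 1 else 0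
  vol_pos : ∀ p, 0 < vol p
  vol_sq : ∀ p, vol p ^ 2 = -Matrix.det (Matrix.of fun μ ν => gdown μ ν p)
  signature : ∀ p, ∃ e : Fin 4 → Fin 4 → ℝ, ∀ i j,
    (∑ μ, ∑ ν, gdown μ ν p * e i μ * e j ν) =
      if i = j then (if i = 0 then -1 else 1) else 0

namespace Lorentzian

variable (g : Lorentzian)

/-- Lowering an index: `v ↦ v♭`. -/
def flat (v : Vec) : Cov := fun μ => ∑ ν, g.gdown μ ν * v ν

/-- Raising an index: `ω ↦ ω♯`. -/
def sharp (ω : Cov) : Vec := fun μ => ∑ ν, g.ginv μ ν * ω ν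

/-- Metric pairing `g(v,w)` of vector fields. -/
def inner (v w : Vec) : Sc := ∑ μ, ∑ ν, g.gdown μ ν * v μ * w ν

/-- Christoffel symbols of the Levi-Civita connection. -/
def christoffel (μ ν ρ : Fin 4) : Sc := fun p =>
  (1 / 2) * ∑ σ, g.ginv μ σ p *
    (pd ν (g.gdown σ ρ) p + pd ρ (g.gdown σ ν) p - pd σ (g.gdown ν ρ) p)

/-- Covariant derivative `∇_v w` of the Levi-Civita connection. -/
def nabla (v w : Vec) : Vec := fun μ =>
  (∑ ν, v ν * pd ν (w μ)) + ∑ ν, ∑ ρ, g.christoffel μ ν ρ * v ν * w ρ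

/-- Divergence `∇_μ X^μ = (1/√(−g)) ∂_μ (√(−g) X^μ)`. -/
def div (v : Vec) : Sc := fun p =>
  (g.vol p)⁻¹ * ∑ μ, pd μ (fun q => g.vol q * v μ q) p

/-- Raising both indices of a 2-form. -/
def up2 (F : Form2) : Form2 := fun μ ν => ∑ ρ, ∑ σ, g.ginv μ ρ * g.ginv ν σ * F ρ σ

/-- The full contraction `F_{μν} F^{μν}`. -/
def contract2 (F : Form2) : Sc := ∑ μ, ∑ ν, F μ ν * g.up2 F μ ν

/-- The current density vector `j = *(d*F)`, in components
`j^μ = (1/√(−g)) ∂_ν (√(−g) F^{μν})`. -/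
def current (F : Form2) : Vec := fun μ => fun p =>
  (g.vol p)⁻¹ * ∑ ν, pd ν (fun q => g.vol q * g.up2 F μ ν q) p

/-- `F` is a null 2-form: `F_{μν}F^{μν} = 0`. -/
def IsNull (F : Form2) : Prop := g.contract2 F = 0

/-- The force-free condition `i_{j♯} F = 0` for the current `j` of `F`. -/
def ForceFree (F : Form2) : Prop := ∀ ν, (∑ μ, F μ ν * g.current F μ) = 0

end Lorentzian

/-- `dF = 0` for a 2-form. -/
def Closed (F : Form2) : Prop :=
  ∀ μ ν ρ, pd μ (F ν ρ) + pd ν (F ρ μ) + pd ρ (F μ ν) = 0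

/-- The Levi-Civita alternating symbol. -/
def eps (μ ν ρ σ : Fin 4) : ℝ :=
  Matrix.det (Matrix.of fun i j => if (![μ, ν, ρ, σ] i) = j then (1 : ℝ) else 0)

/-- Hodge star of a 2-form: `(*F)_{μν} = ½ √(−g) ε_{μνρσ} F^{ρσ}`. -/
def Lorentzian.hodge2 (g : Lorentzian) (F : Form2) : Form2 := fun μ ν => fun p =>
  (1 / 2) * g.vol p * ∑ ρ, ∑ σ, eps μ ν ρ σ * g.up2 F ρ σ p

/-- Exterior derivative of a 2-form (components of the 3-form `dG`). -/
def dTwo (G : Form2) : Fin 4 → Fin 4 → Fin 4 → Sc := fun μ ν ρ =>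
  pd μ (G ν ρ) + pd ν (G ρ μ) + pd ρ (G μ ν)

/-- The (scalar density representing the) wedge product of a 3-form with a 1-form. -/
def wedge31 (J : Fin 4 → Fin 4 → Fin 4 → Sc) (ω : Cov) : Sc := fun p =>
  ∑ μ, ∑ ν, ∑ ρ, ∑ σ, eps μ ν ρ σ * J μ ν ρ p * ω σ p

/-- The chart is adapted to a *null* foliation: on the leaves (the level sets of
`(x³,x⁴)`) the metric is degenerate, i.e. `g³³g⁴⁴ − (g³⁴)² = 0`. -/
def Lorentzian.NullAdapted (g : Lorentzian) : Prop :=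
  ∀ p, g.ginv 2 2 p * g.ginv 3 3 p - (g.ginv 2 3 p) ^ 2 = 0

/-- `M^r = g^{r3} g^{34} − g^{33} g^{r4}` (coordinates `x³,x⁴` are indices `2,3`). -/
def Mvec (g : Lorentzian) : Vec := fun r =>
  g.ginv r 2 * g.ginv 2 3 - g.ginv 2 2 * g.ginv r 3

/-- `N^r = g^{r3} g^{44} − g^{34} g^{r4}`. -/
def Nvec (g : Lorentzian) : Vec := fun r =>
  g.ginv r 2 * g.ginv 3 3 - g.ginv 2 3 * g.ginv r 3

/-- A null foliation adapted frame `(s, l, α♯, n)`: `l, n` null, `s, α♯` unit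
spacelike, `g(n,l) = −1`, all other frame inner products zero, spanning `TM`. -/
structure Frame (g : Lorentzian) (s l a n : Vec) : Prop where
  smooth_s : ∀ μ, Smooth (s μ)
  smooth_l : ∀ μ, Smooth (l μ)
  smooth_a : ∀ μ, Smooth (a μ)
  smooth_n : ∀ μ, Smooth (n μ)
  l_null : g.inner l l = 0
  n_null : g.inner n n = 0
  s_unit : g.inner s s = 1
  a_unit : g.inner a a = 1
  n_l : g.inner n l = -1
  n_s : g.inner n s = 0
  n_a : g.inner n a = 0
  l_s : g.inner l s = 0
  l_a : g.inner l a = 0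
  s_a : g.inner s a = 0
  spans : ∀ (p : Pt) (v : Fin 4 → ℝ), ∃ c : Fin 4 → ℝ,
    ∀ μ, v μ = c 0 * s μ p + c 1 * l μ p + c 2 * a μ p + c 3 * n μ p

/-- `l` is a pregeodesic vector field: `∇_l l` is everywhere proportional to `l`. -/
def Pregeodesic (g : Lorentzian) (l : Vec) : Prop :=
  ∃ f : Sc, g.nabla l l = fun μ => f * l μ

/-- The null expansion scalar `θ = ½[g(∇_s l, s) + g(∇_{α♯} l, α♯)]`. -/
def theta (g : Lorentzian) (l s a : Vec) : Sc :=
  (1 / 2 : Sc) * (g.inner (g.nabla s l) s + g.inner (g.nabla a l) a)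

/-- The foliation admits an equipartition of null mean curvature w.r.t. `l`:
`θ = g(∇_s l, s)`. -/
def Equipartition (g : Lorentzian) (l s a : Vec) : Prop :=
  theta g l s a = g.inner (g.nabla s l) s

/-- `l` admits a uniform equipartition of null mean curvature:
`g(∇_s l, α♯) + g(∇_{α♯} l, s) = 0`. -/
def UniformEquipartition (g : Lorentzian) (l s a : Vec) : Prop :=
  g.inner (g.nabla s l) a + g.inner (g.nabla a l) s = 0

/-- `v` lies in the kernel of the 2-form `F`. -/
def InKernel (F : Form2) (v : Vec) : Prop := ∀ μ, (∑ ν, F μ ν * v ν) = 0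

/-- The kernel of `F` consists at each point exactly of the vectors tangent to the
leaves of the adapted chart (those with vanishing `x³`- and `x⁴`-components). -/
def KernelExact (F : Form2) : Prop :=
  ∀ (p : Pt) (v : Fin 4 → ℝ),
    (∀ μ, (∑ ν, F μ ν p * v ν) = 0) ↔ (v 2 = 0 ∧ v 3 = 0)

/-- The kernel of `F` is at each point exactly the span of `v` and `w`. -/
def KernelSpan (F : Form2) (v w : Vec) : Prop :=
  ∀ (p : Pt) (x : Fin 4 → ℝ),
    (∀ μ, (∑ ν, F μ ν p * x ν) = 0) ↔ ∃ c d : ℝ, ∀ μ, x μ = c * v μ p + d * w μ p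

/-- `u` is a function of `(x³,x⁴)` alone (constant along the leaves). -/
def LeafConstant (u : Sc) : Prop := pd 0 u = 0 ∧ pd 1 u = 0

/-- The 2-form `F = u dx³ ∧ dx⁴`. -/
def chartF (u : Sc) : Form2 := fun μ ν =>
  u * ((if μ = 2 ∧ ν = 3 then (1 : Sc) else 0) - if μ = 3 ∧ ν = 2 then (1 : Sc) else 0)

/-- The transition factor `κ = (α₃ l♭₄ − α₄ l♭₃)⁻¹`. -/
def kappa (g : Lorentzian) (a l : Vec) : Sc :=
  (g.flat a 2 * g.flat l 3 - g.flat a 3 * g.flat l 2)⁻¹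

/-- The 2-form `F = (u·κ) α ∧ l♭` (with `α = a♭`). -/
def frameF (g : Lorentzian) (a l : Vec) (u : Sc) : Form2 := fun μ ν =>
  u * kappa g a l * (g.flat a μ * g.flat l ν - g.flat a ν * g.flat l μ)

end FFE

/-- The 1-form `α = −(g³³)^{−1/2} dx³` (coordinate `x³` has index `2`). -/
def FFE.alphaM (g : FFE.Lorentzian) : FFE.Cov := fun μ => fun p =>
  if μ = 2 then -1 / Real.sqrt (g.ginv 2 2 p) else 0

/-!
Under the null condition `g³³g⁴⁴ = (g³⁴)²` one has `N = λ M` with `λ = g³⁴/g³³`, so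
`div N = λ div M + M(λ) = M(λ)`. On the other hand `M♭ = g³⁴dx³ − g³³dx⁴` annihilates the
leaves while `M` is tangent to them, so `dM♭(M, α♯) = M(g³⁴) α♯³ − M(g³³) α♯⁴ = −(g³³)^{3/2} M(λ)`.
Both sides are therefore nonvanishing multiples of `M(λ)`.
-/

namespace FFE

section Calculus

variable {f h : Sc} {p : Pt}

theorem Smooth.differentiableAt (hf : Smooth f) : DifferentiableAt ℝ f p :=
  (ContDiff.differentiable hf (by simp)).differentiableAt

@[simp]
theorem pd_zero (i : Fin 4) : pd i 0 = 0 := by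
  funext p
  simp [pd]

theorem pd_neg (i : Fin 4) : pd i (-f) = -pd i f := by
  funext p
  simp [pd, fderiv_neg]

theorem pd_mul (i : Fin 4) (hf : DifferentiableAt ℝ f p) (hh : DifferentiableAt ℝ h p) :
    pd i (f * h) p = pd i f p * h p + f p * pd i h p := by
  simp only [pd, fderiv_mul hf hh, add_apply,
    smul_apply, smul_eq_mul]
  ring

theorem pd_inv (i : Fin 4) (hf : DifferentiableAt ℝ f p) (h0 : f p ≠ 0) :
    pd i f⁻¹ p = -pd i f p / f p ^ 2 := by
  have hinv := (hasDerivAt_inv h0).comp_hasFDerivAt p hf.hasFDerivAt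
  unfold pd
  rw [show f⁻¹ = (fun y => y⁻¹) ∘ f from rfl, hinv.fderiv]
  simp only [neg_smul, neg_apply, smul_apply,
    smul_eq_mul]
  ring

variable (v : Vec)

theorem act_neg : act v (-f) = -act v f := by
  simp [act, pd_neg, Finset.sum_neg_distrib]

theorem act_mul (hf : DifferentiableAt ℝ f p) (hh : DifferentiableAt ℝ h p) :
    act v (f * h) p = act v f p * h p + f p * act v h p := by
  simp only [act, Finset.sum_apply, Pi.mul_apply, pd_mul _ hf hh, Finset.sum_mul,
    Finset.mul_sum, ← Finset.sum_add_distrib]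
  exact Finset.sum_congr rfl fun _ _ => by ring

theorem act_div (hf : DifferentiableAt ℝ f p) (hh : DifferentiableAt ℝ h p) (h0 : h p ≠ 0) :
    act v (f / h) p = (act v f p * h p - f p * act v h p) / h p ^ 2 := by
  have hinv : act v h⁻¹ p = -act v h p / h p ^ 2 := by
    simp only [act, Finset.sum_apply, Pi.mul_apply, pd_inv _ hh h0]
    rw [← Finset.sum_neg_distrib, Finset.sum_div]
    exact Finset.sum_congr rfl fun _ _ => by ring
  rw [div_eq_mul_inv f h, act_mul v hf (hh.inv h0), hinv]
  simp only [Pi.inv_apply]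
  field_simp
  ring

end Calculus

theorem dOne_of_tangent {ω : Cov} {v : Vec} (w : Vec) (hv2 : v 2 = 0) (hv3 : v 3 = 0)
    (hω0 : ω 0 = 0) (hω1 : ω 1 = 0) :
    dOne ω v w = act v (ω 2) * w 2 + act v (ω 3) * w 3 := by
  simp only [dOne, act, Fin.sum_univ_four, hv2, hv3, hω0, hω1, pd_zero,
    zero_sub, sub_zero, sub_self, neg_mul, zero_mul, mul_zero, neg_zero, add_zero, zero_add]
  ring

namespace Lorentzian

variable (g : Lorentzian)

theorem sum_gdown_mul_ginv (μ ν : Fin 4) (p : Pt) :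
    ∑ ρ, g.gdown μ ρ p * g.ginv ρ ν p = if ν = μ then 1 else 0 := by
  rw [← g.inv_gdown ν μ p]
  exact Finset.sum_congr rfl fun ρ _ => by rw [g.symm_gdown, g.symm_ginv, mul_comm]

theorem flat_sharp (ω : Cov) : g.flat (g.sharp ω) = ω := by
  funext μ p
  simp only [flat, sharp, Finset.sum_apply, Pi.mul_apply, Finset.mul_sum, ← mul_assoc]
  rw [Finset.sum_comm]
  simp [← Finset.sum_mul, sum_gdown_mul_ginv]

theorem div_mul {f : Sc} {v : Vec} {p : Pt} (hf : DifferentiableAt ℝ f p)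
    (hv : ∀ μ, DifferentiableAt ℝ (g.vol * v μ) p) :
    g.div (fun μ => f * v μ) p = f p * g.div v p + act v f p := by
  have hvol : g.vol p ≠ 0 := (g.vol_pos p).ne'
  have hprod : ∀ μ, pd μ (fun q => g.vol q * (f q * v μ q)) p
      = pd μ f p * (g.vol p * v μ p) + f p * pd μ (fun q => g.vol q * v μ q) p := fun μ => by
    rw [show (fun q => g.vol q * (f q * v μ q)) = f * (g.vol * v μ) from
      funext fun q => mul_left_comm _ _ _, pd_mul μ hf (hv μ)]
    rfl
  have hact : ∑ μ, pd μ f p * (g.vol p * v μ p) = g.vol p * act v f p := by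
    simp only [act, Finset.sum_apply, Pi.mul_apply, Finset.mul_sum]
    exact Finset.sum_congr rfl fun _ _ => by ring
  simp only [Lorentzian.div, Pi.mul_apply]
  simp only [hprod, Finset.sum_add_distrib, ← Finset.mul_sum, hact]
  field_simp
  ring

end Lorentzian

variable (g : Lorentzian)

theorem Mvec_eq_sharp : Mvec g = g.sharp ![0, 0, g.ginv 2 3, -g.ginv 2 2] := by
  funext r
  simp only [Mvec, Lorentzian.sharp, Fin.sum_univ_four, Matrix.cons_val, mul_zero, zero_add,
    mul_neg]
  ring

theorem flat_Mvec : g.flat (Mvec g) = ![0, 0, g.ginv 2 3, -g.ginv 2 2] := by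
  rw [Mvec_eq_sharp, Lorentzian.flat_sharp]

theorem Mvec_two : Mvec g 2 = 0 := by
  simp [Mvec]

theorem Mvec_three (hdeg : g.NullAdapted) : Mvec g 3 = 0 := by
  funext p
  simp only [Mvec, g.symm_ginv 3 2, Pi.sub_apply, Pi.mul_apply, Pi.zero_apply]
  linear_combination -hdeg p

theorem sharp_alphaM (ν : Fin 4) (p : Pt) :
    g.sharp (alphaM g) ν p = -g.ginv ν 2 p / √(g.ginv 2 2 p) := by
  simp only [Lorentzian.sharp, Finset.sum_apply, Pi.mul_apply, alphaM, mul_ite, mul_zero,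
    Finset.sum_ite_eq', Finset.mem_univ, if_true]
  ring

/-- The factor `λ` in `N = λ M`. The paper writes it as `g⁴⁴/g³⁴`, which agrees with `g³⁴/g³³`
where `g³⁴ ≠ 0` but is undefined where `g³⁴ = 0` (and there `N = 0`). -/
def nmRatio : Sc := g.ginv 2 3 / g.ginv 2 2

theorem Nvec_eq_nmRatio_mul (hdeg : g.NullAdapted) (h33 : ∀ p, g.ginv 2 2 p ≠ 0) :
    Nvec g = fun μ => nmRatio g * Mvec g μ := by
  funext μ p
  simp only [Nvec, Mvec, nmRatio, Pi.mul_apply, Pi.sub_apply, Pi.div_apply]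
  field_simp [h33 p]
  linear_combination g.ginv μ 2 p * hdeg p

theorem smooth_Mvec (r : Fin 4) : Smooth (Mvec g r) :=
  ((g.smooth_ginv r 2).mul (g.smooth_ginv 2 3)).sub ((g.smooth_ginv 2 2).mul (g.smooth_ginv r 3))

theorem differentiableAt_nmRatio {p : Pt} (h33 : g.ginv 2 2 p ≠ 0) :
    DifferentiableAt ℝ (nmRatio g) p := by
  rw [nmRatio, div_eq_mul_inv]
  exact (g.smooth_ginv 2 3).differentiableAt.mul ((g.smooth_ginv 2 2).differentiableAt.inv h33)

theorem div_Nvec (hdeg : g.NullAdapted) (h33 : ∀ p, g.ginv 2 2 p ≠ 0)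
    (hdivM : g.div (Mvec g) = 0) : g.div (Nvec g) = act (Mvec g) (nmRatio g) := by
  funext p
  rw [Nvec_eq_nmRatio_mul g hdeg h33, g.div_mul (differentiableAt_nmRatio g (h33 p))
    fun μ => Smooth.differentiableAt (g.smooth_vol.mul (smooth_Mvec g μ)), hdivM]
  simp

theorem dOne_flat_Mvec (hdeg : g.NullAdapted) (hg33 : ∀ p, 0 < g.ginv 2 2 p) :
    dOne (g.flat (Mvec g)) (Mvec g) (g.sharp (alphaM g)) =
      fun p => -(g.ginv 2 2 p * √(g.ginv 2 2 p)) * act (Mvec g) (nmRatio g) p := by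
  funext p
  rw [flat_Mvec, dOne_of_tangent _ (Mvec_two g) (Mvec_three g hdeg) rfl rfl]
  simp only [Matrix.cons_val, act_neg, Pi.add_apply, Pi.mul_apply, Pi.neg_apply, sharp_alphaM,
    g.symm_ginv 3 2]
  rw [nmRatio, act_div _ (g.smooth_ginv 2 3).differentiableAt
    (g.smooth_ginv 2 2).differentiableAt (hg33 p).ne']
  have hsqrt := Real.sq_sqrt (hg33 p).le
  have hsqrt_pos := Real.sqrt_pos.mpr (hg33 p)
  field_simp
  rw [hsqrt, mul_div_cancel_left₀ _ (hg33 p).ne']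
  ring

end FFE

theorem FFE.divergence_N_iff_general (g : Lorentzian) (hdeg : g.NullAdapted)
    (hg33 : ∀ p, 0 < g.ginv 2 2 p)
    (hdivM : g.div (Mvec g) = 0) :
    g.div (Nvec g) = 0 ↔
      dOne (g.flat (Mvec g)) (Mvec g) (g.sharp (alphaM g)) = 0 := by
  have hfactor : ∀ p, -(g.ginv 2 2 p * √(g.ginv 2 2 p)) ≠ 0 := fun p =>
    neg_ne_zero.mpr (mul_pos (hg33 p) (Real.sqrt_pos.mpr (hg33 p))).ne'
  rw [div_Nvec g hdeg (fun p => (hg33 p).ne') hdivM, dOne_flat_Mvec g hdeg hg33, funext_iff,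
    funext_iff]
  simp only [Pi.zero_apply, mul_eq_zero, hfactor, false_or]

/-- In a null foliation adapted chart, with `l = M`
(`M^r = g^{r3}g^{34} − g^{33}g^{r4}`, divergence free), `α = −(g³³)^{−1/2}dx³`,
and `N^r = g^{r3}g^{44} − g^{34}g^{r4}`:  `∇_μ N^μ = 0` if and only if
`dM♭(M, α♯) = 0`. -/
theorem FFE.divergence_N_iff (g : Lorentzian) (hdeg : g.NullAdapted)
    (hg33 : ∀ p, 0 < g.ginv 2 2 p)
    (s n : Vec) (hframe : Frame g s (Mvec g) (g.sharp (alphaM g)) n)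
    (hs2 : s 2 = 0) (hs3 : s 3 = 0)
    (hdivM : g.div (Mvec g) = 0) :
    g.div (Nvec g) = 0 ↔
      dOne (g.flat (Mvec g)) (Mvec g) (g.sharp (alphaM g)) = 0 :=
  FFE.divergence_N_iff_general g hdeg hg33 hdivM
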